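/- Let (E, L, B) be a weakly left-resolving labeled space and A ∈ B nonempty. Let H(A) be the smallest hereditary set containing A, and define S(H(A)) := {B ∈ B : there is n ≥ 0 such that r(B, β) ∈ H(A) for all labeled paths β of length n, and r(B, γ) ∈ H(A) ⊕ B_reg for all labeled paths γ (including ε) of length less than n}, where H(A) ⊕ B_reg := {C ∪ D : C ∈ H(A), D ∈ B_reg}. Then S(H(A)) is a hereditary saturated subset of B, and it is the smallest saturated hereditary subset of B containing A. -/

import Mathlib

universe u v

variable {V : Type u} {Λ : Type v}

/-- The relative range `r(S, α)` of a set of vertices along a labeled path. -/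
def relRange (Edge : V → Λ → V → Prop) : Set V → List Λ → Set V
  | S, [] => S
  | S, a :: α => relRange Edge {w | ∃ u ∈ S, Edge u a w} α

/-- The range `r(α)` of a labeled path. -/
def lrange (Edge : V → Λ → V → Prop) (α : List Λ) : Set V :=
  relRange Edge Set.univ α

/-- `α` is a (nonempty) labeled path of the labeled graph. -/
def IsLP (Edge : V → Λ → V → Prop) (α : List Λ) : Prop :=
  α ≠ [] ∧ (lrange Edge α).Nonempty

/-- `L(SE¹)`: labels of edges emitted from `S`. -/
def edgeLabels (Edge : V → Λ → V → Prop) (S : Set V) : Set Λ :=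
  {a | ∃ u ∈ S, ∃ w, Edge u a w}

/-- `S` is regular: every nonempty `B ∈ ℬ` with `B ⊆ S` emits a finite nonzero set of labels. -/
def RegularSet (Edge : V → Λ → V → Prop) (ℬ : Set (Set V)) (S : Set V) : Prop :=
  ∀ B ∈ ℬ, B ⊆ S → B.Nonempty →
    (edgeLabels Edge B).Finite ∧ (edgeLabels Edge B).Nonempty

/-- `H ⊆ ℬ` is hereditary. -/
def Hered (Edge : V → Λ → V → Prop) (ℬ H : Set (Set V)) : Prop :=
  H ⊆ ℬ ∧ (∀ A ∈ H, ∀ α : List Λ, IsLP Edge α → relRange Edge A α ∈ H) ∧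
    (∀ A ∈ H, ∀ B ∈ H, A ∪ B ∈ H) ∧ (∀ A ∈ H, ∀ B ∈ ℬ, B ⊆ A → B ∈ H)

/-- `H` is saturated. -/
def Satur (Edge : V → Λ → V → Prop) (ℬ H : Set (Set V)) : Prop :=
  ∀ A ∈ ℬ, RegularSet Edge ℬ A →
    (∀ α : List Λ, IsLP Edge α → relRange Edge A α ∈ H) → A ∈ H

/-- `H(A)`: sets covered by finitely many relative ranges `r(A, αᵢ)`, `αᵢ ∈ L^#(E)`. -/
def HSet (Edge : V → Λ → V → Prop) (ℬ : Set (Set V)) (A : Set V) : Set (Set V) :=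
  {B ∈ ℬ | ∃ l : List (List Λ), (∀ α ∈ l, α = [] ∨ IsLP Edge α) ∧
    B ⊆ ⋃ α ∈ l, relRange Edge A α}

/-- `S(H(A))`: the saturation of `H(A)`. -/
def SHSet (Edge : V → Λ → V → Prop) (ℬ : Set (Set V)) (A : Set V) : Set (Set V) :=
  {B ∈ ℬ | ∃ n : ℕ,
    (∀ β : List Λ, (β = [] ∨ IsLP Edge β) → β.length = n →
      relRange Edge B β ∈ HSet Edge ℬ A) ∧
    (∀ γ : List Λ, (γ = [] ∨ IsLP Edge γ) → γ.length < n →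
      ∃ C ∈ HSet Edge ℬ A, ∃ D ∈ ℬ, RegularSet Edge ℬ D ∧ relRange Edge B γ = C ∪ D)}

/-- `ℬ` is an accommodating set for the labeled graph. -/
def Accommodating (Edge : V → Λ → V → Prop) (ℬ : Set (Set V)) : Prop :=
  (∀ α : List Λ, IsLP Edge α → lrange Edge α ∈ ℬ) ∧
    (∀ A ∈ ℬ, ∀ α : List Λ, IsLP Edge α → relRange Edge A α ∈ ℬ) ∧
    (∀ A ∈ ℬ, ∀ B ∈ ℬ, A ∪ B ∈ ℬ) ∧ (∀ A ∈ ℬ, ∀ B ∈ ℬ, A ∩ B ∈ ℬ)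

/-- `ℬ` is non-degenerate: closed under relative complements (and contains `∅`). -/
def NonDegenerate (ℬ : Set (Set V)) : Prop :=
  (∅ : Set V) ∈ ℬ ∧ ∀ A ∈ ℬ, ∀ B ∈ ℬ, A \ B ∈ ℬ

/-- The labeled space is weakly left-resolving. -/
def WLR (Edge : V → Λ → V → Prop) (ℬ : Set (Set V)) : Prop :=
  ∀ A ∈ ℬ, ∀ B ∈ ℬ, ∀ α : List Λ, IsLP Edge α →
    relRange Edge (A ∩ B) α = relRange Edge A α ∩ relRange Edge B α

/-- `ℬ` is the smallest non-degenerate accommodating set. -/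
def SmallestAccom (Edge : V → Λ → V → Prop) (ℬ : Set (Set V)) : Prop :=
  Accommodating Edge ℬ ∧ NonDegenerate ℬ ∧
    ∀ ℬ' : Set (Set V), Accommodating Edge ℬ' → NonDegenerate ℬ' → ℬ ⊆ ℬ'

/-- `x_{[1,n]}`: the length-`n` prefix of an infinite word. -/
def wordPrefix (x : ℕ → Λ) (n : ℕ) : List Λ := List.ofFn fun i : Fin n => x i.val

/-- `x` lies in the closure of `L(E^∞)`: all finite prefixes are labeled paths. -/
def InfWord (Edge : V → Λ → V → Prop) (x : ℕ → Λ) : Prop :=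
  ∀ n : ℕ, 1 ≤ n → IsLP Edge (wordPrefix x n)

/-- Strong cofinality of a labeled space. -/
def StrCofinal (Edge : V → Λ → V → Prop) (ℬ : Set (Set V)) : Prop :=
  ∀ A ∈ ℬ, A.Nonempty → ∀ x : ℕ → Λ, InfWord Edge x →
    ∃ N : ℕ, 1 ≤ N ∧ ∃ l : List (List Λ), (∀ α ∈ l, IsLP Edge α) ∧
      lrange Edge (wordPrefix x N) ⊆ ⋃ α ∈ l, relRange Edge A α

/-- Minimality: the only hereditary saturated subsets of `ℬ` are `{∅}` and `ℬ`. -/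
def MinimalLS (Edge : V → Λ → V → Prop) (ℬ : Set (Set V)) : Prop :=
  ∀ H : Set (Set V), Hered Edge ℬ H → Satur Edge ℬ H → H ⊆ {∅} ∨ H = ℬ

/-- `L(SEⁿ)`: labels of paths of length `n` with source in `S`. -/
def labelsOfLen (Edge : V → Λ → V → Prop) (S : Set V) (n : ℕ) : Set (List Λ) :=
  {β | β.length = n ∧ (relRange Edge S β).Nonempty}

/-- The labeled space is disagreeable. -/
def Disagreeable (Edge : V → Λ → V → Prop) (ℬ : Set (Set V)) : Prop :=
  ∀ A ∈ ℬ, A.Nonempty → ∀ β : List Λ, IsLP Edge β →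
    ∃ n : ℕ, 1 ≤ n ∧ labelsOfLen Edge A (β.length * n) ≠ {(List.replicate n β).flatten}

/-- `(α, A)` is a cycle. -/
def IsCycle (Edge : V → Λ → V → Prop) (ℬ : Set (Set V)) (α : List Λ) (A : Set V) : Prop :=
  IsLP Edge α ∧ A ∈ ℬ ∧ A.Nonempty ∧ ∀ B ∈ ℬ, B ⊆ A → relRange Edge B α = B

/-- The cycle `(α, A)` has an exit. -/
def CycleHasExit (Edge : V → Λ → V → Prop) (ℬ : Set (Set V)) (α : List Λ) (A : Set V) : Prop :=
  ∃ t : ℕ, 1 ≤ t ∧ t ≤ α.length ∧ ∃ B ∈ ℬ, B.Nonempty ∧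
    B ⊆ relRange Edge A (α.take t) ∧
    edgeLabels Edge B ≠ {a : Λ | α[t % α.length]? = some a}

/-- The cycle `(α, A)` has no exits. -/
def CycleNoExit (Edge : V → Λ → V → Prop) (ℬ : Set (Set V)) (α : List Λ) (A : Set V) : Prop :=
  ∀ t : ℕ, 1 ≤ t → t ≤ α.length → ∀ B ∈ ℬ, B.Nonempty →
    B ⊆ relRange Edge A (α.take t) →
    RegularSet Edge ℬ B ∧ edgeLabels Edge B = {a : Λ | α[t % α.length]? = some a}

/-- Condition (L): every cycle has an exit. -/
def CondL (Edge : V → Λ → V → Prop) (ℬ : Set (Set V)) : Prop :=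
  ∀ (α : List Λ) (A : Set V), IsCycle Edge ℬ α A → CycleHasExit Edge ℬ α A

/-- `α` is a loop at `A`. -/
def IsLoop (Edge : V → Λ → V → Prop) (α : List Λ) (A : Set V) : Prop :=
  IsLP Edge α ∧ A ⊆ relRange Edge A α

/-- The loop `(α, A)` has an exit. -/
def LoopHasExit (Edge : V → Λ → V → Prop) (α : List Λ) (A : Set V) : Prop :=
  {β : List Λ | ∃ k : ℕ, 1 ≤ k ∧ k ≤ α.length ∧ β = α.take k} ⊂
      {β : List Λ | 1 ≤ β.length ∧ β.length ≤ α.length ∧ (relRange Edge A β).Nonempty} ∨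
    A ⊂ relRange Edge A α

/-- `β` is an irreducible path: not a repetition of a proper initial path. -/
def IrreduciblePath (β : List Λ) : Prop :=
  ∀ k : ℕ, 1 ≤ k → k < β.length → ∀ m : ℕ, β ≠ (List.replicate m (β.take k)).flatten

/-- The generalized vertex `[v]_l`. -/
def gvClass (Edge : V → Λ → V → Prop) (l : ℕ) (v : V) : Set V :=
  {w | ∀ β : List Λ, 1 ≤ β.length → β.length ≤ l → (v ∈ lrange Edge β ↔ w ∈ lrange Edge β)}

/-- `s(x)`: sources of infinite paths labeled by `x`. -/
def srcInf (Edge : V → Λ → V → Prop) (x : ℕ → Λ) : Set V :=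
  {w | ∃ p : ℕ → V, p 0 = w ∧ ∀ n : ℕ, Edge (p n) (x n) (p (n + 1))}

/-!
Write `S(H(A))` as the union of levels: `B` is at level `n` when all ranges `r(B, β)` with
`|β| = n` lie in `H(A)` and all shorter ranges lie in `H(A) ⊕ B_reg`. Levels are monotone in `n`
and drop by `|α|` along `r(·, α)`; from this `S(H(A))` is hereditary. It is saturated because a
regular `C` emits only finitely many labels `a`, so the ranges `r(C, a)` share a common level `n`,
which puts `C` at level `n + 1`. Conversely, a hereditary saturated `H ∋ A` contains `H(A)`, and
induction on the level shows that it contains every `B = C ∪ D` at level `n + 1`: each `r(D, α)`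
lies below `r(B, α)`, which is at level `n`, so `D ∈ H` by saturation.
-/

section LabeledSpace

variable {Edge : V → Λ → V → Prop} {ℬ : Set (Set V)} {A : Set V}

theorem relRange_append (S : Set V) (α β : List Λ) :
    relRange Edge S (α ++ β) = relRange Edge (relRange Edge S α) β := by
  induction α generalizing S with
  | nil => rfl
  | cons a α ih => exact ih _

theorem relRange_mono {S T : Set V} (h : S ⊆ T) (γ : List Λ) :
    relRange Edge S γ ⊆ relRange Edge T γ := by
  induction γ generalizing S T with
  | nil => exact h
  | cons a γ ih => exact ih fun w ⟨u, hu, he⟩ => ⟨u, h hu, he⟩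

theorem relRange_empty (γ : List Λ) : relRange Edge (∅ : Set V) γ = ∅ := by
  induction γ with
  | nil => rfl
  | cons a γ ih =>
    simpa only [relRange, Set.mem_empty_iff_false, false_and, exists_false, Set.ofPred_false]

theorem relRange_union (S T : Set V) (γ : List Λ) :
    relRange Edge (S ∪ T) γ = relRange Edge S γ ∪ relRange Edge T γ := by
  induction γ generalizing S T with
  | nil => rfl
  | cons a γ ih =>
    simp only [relRange, ← ih]
    congr 1
    ext w
    simp only [Set.mem_union, Set.mem_ofPred_eq, or_and_right, exists_or]

theorem relRange_iUnion {ι : Sort*} (f : ι → Set V) (γ : List Λ) :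
    relRange Edge (⋃ i, f i) γ = ⋃ i, relRange Edge (f i) γ := by
  induction γ generalizing f with
  | nil => rfl
  | cons a γ ih =>
    simp only [relRange, ← ih]
    congr 1
    ext w
    simp only [Set.mem_iUnion, Set.mem_ofPred_eq]
    grind

theorem relRange_singleton_nonempty_iff {S : Set V} {a : Λ} :
    (relRange Edge S [a]).Nonempty ↔ a ∈ edgeLabels Edge S :=
  ⟨fun ⟨w, u, hu, he⟩ => ⟨u, hu, w, he⟩, fun ⟨u, hu, w, he⟩ => ⟨w, u, hu, he⟩⟩

theorem isLP_of_relRange_nonempty {S : Set V} {γ : List Λ}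
    (h : (relRange Edge S γ).Nonempty) : γ = [] ∨ IsLP Edge γ :=
  or_iff_not_imp_left.mpr fun hγ => ⟨hγ, h.mono (relRange_mono (Set.subset_univ S) γ)⟩

/-- The range along a word outside `L^#(E)` is empty. -/
theorem forall_isLP_relRange_iff {P : Set V → Prop} (h₀ : P ∅) {Q : List Λ → Prop}
    {S : Set V} :
    (∀ β, (β = [] ∨ IsLP Edge β) → Q β → P (relRange Edge S β)) ↔
      ∀ β, Q β → P (relRange Edge S β) := by
  refine ⟨fun h β hQ => ?_, fun h β _ => h β⟩
  rcases (relRange Edge S β).eq_empty_or_nonempty with hβ | hβ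
  · exact hβ ▸ h₀
  · exact h β (isLP_of_relRange_nonempty hβ) hQ

theorem relRange_mem (hacc : Accommodating Edge ℬ) (hnd : NonDegenerate ℬ) {S : Set V}
    (hS : S ∈ ℬ) (γ : List Λ) : relRange Edge S γ ∈ ℬ := by
  rcases (relRange Edge S γ).eq_empty_or_nonempty with h | h
  · exact h ▸ hnd.1
  · rcases isLP_of_relRange_nonempty h with rfl | hγ
    exacts [hS, hacc.2.1 S hS γ hγ]

theorem edgeLabels_mono {S T : Set V} (h : S ⊆ T) : edgeLabels Edge S ⊆ edgeLabels Edge T :=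
  fun _ ⟨u, hu, w, he⟩ => ⟨u, h hu, w, he⟩

theorem edgeLabels_union (S T : Set V) :
    edgeLabels Edge (S ∪ T) = edgeLabels Edge S ∪ edgeLabels Edge T := by
  ext a
  simp only [edgeLabels, Set.mem_ofPred_eq, Set.mem_union, or_and_right, exists_or]

theorem RegularSet.empty : RegularSet Edge ℬ ∅ :=
  fun _ _ hB hne => absurd (Set.subset_empty_iff.mp hB) hne.ne_empty

theorem RegularSet.mono {S T : Set V} (h : RegularSet Edge ℬ T) (hST : S ⊆ T) :
    RegularSet Edge ℬ S :=
  fun B hB hBS => h B hB (hBS.trans hST)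

theorem RegularSet.finite_edgeLabels {S B : Set V} (h : RegularSet Edge ℬ S) (hB : B ∈ ℬ)
    (hBS : B ⊆ S) : (edgeLabels Edge B).Finite := by
  rcases B.eq_empty_or_nonempty with rfl | hne
  · simp [edgeLabels]
  · exact (h B hB hBS hne).1

/-- Split `B ⊆ S ∪ T` as `(B ∩ S) ∪ (B \ S)`; non-degeneracy keeps both pieces in `ℬ`. -/
theorem RegularSet.union (hacc : Accommodating Edge ℬ) (hnd : NonDegenerate ℬ) {S T : Set V}
    (hS : S ∈ ℬ) (hSreg : RegularSet Edge ℬ S) (hTreg : RegularSet Edge ℬ T) :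
    RegularSet Edge ℬ (S ∪ T) := by
  intro B hB hBST ⟨x, hx⟩
  have hBS : B ∩ S ∈ ℬ := hacc.2.2.2 B hB S hS
  have hBT : B \ S ∈ ℬ := hnd.2 B hB S hS
  have hsubT : B \ S ⊆ T := fun y hy => (hBST hy.1).resolve_left hy.2
  refine ⟨?_, ?_⟩
  · rw [← Set.inter_union_sdiff B S, edgeLabels_union]
    exact (hSreg.finite_edgeLabels hBS Set.inter_subset_right).union
      (hTreg.finite_edgeLabels hBT hsubT)
  · by_cases hxS : x ∈ S
    · exact (hSreg _ hBS Set.inter_subset_right ⟨x, hx, hxS⟩).2.mono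
        (edgeLabels_mono Set.inter_subset_left)
    · exact (hTreg _ hBT hsubT ⟨x, hx, hxS⟩).2.mono (edgeLabels_mono Set.sdiff_subset)

theorem mem_HSet_iff {B : Set V} :
    B ∈ HSet Edge ℬ A ↔ B ∈ ℬ ∧ ∃ l : List (List Λ), B ⊆ ⋃ α ∈ l, relRange Edge A α := by
  classical
  refine ⟨fun ⟨hB, l, _, hcov⟩ => ⟨hB, l, hcov⟩, fun ⟨hB, l, hcov⟩ => ?_⟩
  refine ⟨hB, l.filter fun α => α = [] ∨ IsLP Edge α, by simp, fun x hx => ?_⟩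
  obtain ⟨α, hα, hxα⟩ := Set.mem_iUnion₂.mp (hcov hx)
  exact Set.mem_biUnion
    (List.mem_filter.mpr ⟨hα, decide_eq_true (isLP_of_relRange_nonempty ⟨x, hxα⟩)⟩) hxα

theorem HSet.empty_mem (hnd : NonDegenerate ℬ) : (∅ : Set V) ∈ HSet Edge ℬ A :=
  mem_HSet_iff.mpr ⟨hnd.1, [], Set.empty_subset _⟩

theorem HSet.self_mem (hA : A ∈ ℬ) : A ∈ HSet Edge ℬ A :=
  mem_HSet_iff.mpr ⟨hA, [[]], by simp [relRange]⟩

theorem HSet.mem_of_subset {B C : Set V} (hB : B ∈ HSet Edge ℬ A) (hC : C ∈ ℬ) (hCB : C ⊆ B) :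
    C ∈ HSet Edge ℬ A :=
  let ⟨_, l, hl, hcov⟩ := hB
  ⟨hC, l, hl, hCB.trans hcov⟩

theorem HSet.union_mem (hacc : Accommodating Edge ℬ) {B C : Set V} (hB : B ∈ HSet Edge ℬ A)
    (hC : C ∈ HSet Edge ℬ A) : B ∪ C ∈ HSet Edge ℬ A := by
  obtain ⟨hBℬ, l, hcovB⟩ := mem_HSet_iff.mp hB
  obtain ⟨hCℬ, m, hcovC⟩ := mem_HSet_iff.mp hC
  refine mem_HSet_iff.mpr ⟨hacc.2.2.1 B hBℬ C hCℬ, l ++ m, Set.union_subset ?_ ?_⟩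
  · exact hcovB.trans (Set.biUnion_mono (fun α hα => List.mem_append_left m hα) fun _ _ => le_rfl)
  · exact hcovC.trans (Set.biUnion_mono (fun α hα => List.mem_append_right l hα) fun _ _ => le_rfl)

theorem HSet.relRange_mem (hacc : Accommodating Edge ℬ) (hnd : NonDegenerate ℬ) {B : Set V}
    (hB : B ∈ HSet Edge ℬ A) (γ : List Λ) : relRange Edge B γ ∈ HSet Edge ℬ A := by
  obtain ⟨hBℬ, l, hcov⟩ := mem_HSet_iff.mp hB
  refine mem_HSet_iff.mpr ⟨_root_.relRange_mem hacc hnd hBℬ γ, l.map (· ++ γ), ?_⟩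
  refine (relRange_mono hcov γ).trans ?_
  simp only [relRange_iUnion, ← relRange_append]
  exact Set.iUnion₂_subset fun α hα x hx =>
    Set.mem_iUnion₂.mpr ⟨α ++ γ, List.mem_map_of_mem hα, hx⟩

theorem Hered.empty_mem {H : Set (Set V)} (hH : Hered Edge ℬ H) (hnd : NonDegenerate ℬ)
    {B : Set V} (hB : B ∈ H) : ∅ ∈ H :=
  hH.2.2.2 B hB ∅ hnd.1 (Set.empty_subset B)

theorem Hered.biUnion_mem {H : Set (Set V)} (hH : Hered Edge ℬ H) (h₀ : ∅ ∈ H)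
    {f : List Λ → Set V} {l : List (List Λ)} (hl : ∀ α ∈ l, f α ∈ H) : (⋃ α ∈ l, f α) ∈ H := by
  induction l with
  | nil => simpa using h₀
  | cons β l ih =>
    simp only [List.mem_cons, Set.iUnion_or, Set.iUnion_union_distrib, Set.iUnion_iUnion_eq_left]
    exact hH.2.2.1 _ (hl β List.mem_cons_self) _ (ih fun α hα => hl α (List.mem_cons_of_mem β hα))

theorem HSet_subset_of_hered (hnd : NonDegenerate ℬ) {H : Set (Set V)} (hH : Hered Edge ℬ H)
    (hAH : A ∈ H) : HSet Edge ℬ A ⊆ H := by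
  rintro B ⟨hB, l, hl, hcov⟩
  refine hH.2.2.2 _ (hH.biUnion_mem (hH.empty_mem hnd hAH) fun α hα => ?_) B hB hcov
  rcases hl α hα with rfl | hα
  exacts [hAH, hH.2.1 A hAH α hα]

variable (Edge ℬ A) in
/-- `H(A) ⊕ B_reg`. -/
def HSetOplusReg : Set (Set V) :=
  {B | ∃ C ∈ HSet Edge ℬ A, ∃ D ∈ ℬ, RegularSet Edge ℬ D ∧ B = C ∪ D}

theorem HSetOplusReg.of_HSet (hnd : NonDegenerate ℬ) {B : Set V} (hB : B ∈ HSet Edge ℬ A) :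
    B ∈ HSetOplusReg Edge ℬ A :=
  ⟨B, hB, ∅, hnd.1, RegularSet.empty, (Set.union_empty B).symm⟩

theorem HSetOplusReg.of_regularSet (hnd : NonDegenerate ℬ) {B : Set V} (hB : B ∈ ℬ)
    (hreg : RegularSet Edge ℬ B) : B ∈ HSetOplusReg Edge ℬ A :=
  ⟨∅, HSet.empty_mem hnd, B, hB, hreg, (Set.empty_union B).symm⟩

theorem HSetOplusReg.union_mem (hacc : Accommodating Edge ℬ) (hnd : NonDegenerate ℬ)
    {B B' : Set V} (hB : B ∈ HSetOplusReg Edge ℬ A) (hB' : B' ∈ HSetOplusReg Edge ℬ A) :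
    B ∪ B' ∈ HSetOplusReg Edge ℬ A := by
  obtain ⟨C, hC, D, hD, hDreg, rfl⟩ := hB
  obtain ⟨C', hC', D', hD', hDreg', rfl⟩ := hB'
  exact ⟨C ∪ C', HSet.union_mem hacc hC hC', D ∪ D', hacc.2.2.1 D hD D' hD',
    hDreg.union hacc hnd hD hDreg', Set.union_union_union_comm C D C' D'⟩

theorem HSetOplusReg.mem_of_subset (hacc : Accommodating Edge ℬ) {B B' : Set V}
    (hB : B ∈ HSetOplusReg Edge ℬ A) (hB' : B' ∈ ℬ) (hB'B : B' ⊆ B) :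
    B' ∈ HSetOplusReg Edge ℬ A := by
  obtain ⟨C, hC, D, hD, hDreg, rfl⟩ := hB
  refine ⟨B' ∩ C, HSet.mem_of_subset hC (hacc.2.2.2 B' hB' C hC.1) Set.inter_subset_right,
    B' ∩ D, hacc.2.2.2 B' hB' D hD, hDreg.mono Set.inter_subset_right, ?_⟩
  rw [← Set.inter_union_distrib_left, Set.inter_eq_left.mpr hB'B]

variable (Edge ℬ A) in
def SHLevel (n : ℕ) (B : Set V) : Prop :=
  (∀ β : List Λ, β.length = n → relRange Edge B β ∈ HSet Edge ℬ A) ∧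
    ∀ γ : List Λ, γ.length < n → relRange Edge B γ ∈ HSetOplusReg Edge ℬ A

theorem mem_SHSet_iff (hnd : NonDegenerate ℬ) {B : Set V} :
    B ∈ SHSet Edge ℬ A ↔ B ∈ ℬ ∧ ∃ n, SHLevel Edge ℬ A n B :=
  and_congr_right fun _ => exists_congr fun _ =>
    and_congr (forall_isLP_relRange_iff (HSet.empty_mem hnd))
      (forall_isLP_relRange_iff (P := (· ∈ HSetOplusReg Edge ℬ A))
        (HSetOplusReg.of_HSet hnd (HSet.empty_mem hnd)))

namespace SHLevel

variable {n m : ℕ} {B : Set V}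

theorem empty (hnd : NonDegenerate ℬ) (n : ℕ) : SHLevel Edge ℬ A n ∅ :=
  ⟨fun _ _ => by rw [relRange_empty]; exact HSet.empty_mem hnd,
    fun _ _ => by rw [relRange_empty]; exact HSetOplusReg.of_HSet hnd (HSet.empty_mem hnd)⟩

theorem zero_iff : SHLevel Edge ℬ A 0 B ↔ B ∈ HSet Edge ℬ A :=
  ⟨fun h => h.1 [] rfl, fun h => ⟨fun _ hβ => List.length_eq_zero_iff.mp hβ ▸ h,
    fun _ hγ => absurd hγ (Nat.not_lt_zero _)⟩⟩

theorem relRange_mem_HSet (hacc : Accommodating Edge ℬ) (hnd : NonDegenerate ℬ)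
    (h : SHLevel Edge ℬ A n B) {β : List Λ} (hβ : n ≤ β.length) :
    relRange Edge B β ∈ HSet Edge ℬ A := by
  rw [← List.take_append_drop n β, relRange_append]
  exact HSet.relRange_mem hacc hnd (h.1 _ (List.length_take_of_le hβ)) _

theorem mono (hacc : Accommodating Edge ℬ) (hnd : NonDegenerate ℬ) (h : SHLevel Edge ℬ A n B)
    (hnm : n ≤ m) : SHLevel Edge ℬ A m B := by
  refine ⟨fun β hβ => h.relRange_mem_HSet hacc hnd (hβ ▸ hnm), fun γ hγ => ?_⟩
  by_cases hγn : γ.length < n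
  · exact h.2 γ hγn
  · exact HSetOplusReg.of_HSet hnd (h.relRange_mem_HSet hacc hnd (not_lt.mp hγn))

theorem union (hacc : Accommodating Edge ℬ) (hnd : NonDegenerate ℬ) {B' : Set V}
    (h : SHLevel Edge ℬ A n B) (h' : SHLevel Edge ℬ A n B') : SHLevel Edge ℬ A n (B ∪ B') :=
  ⟨fun β hβ => relRange_union B B' β ▸ HSet.union_mem hacc (h.1 β hβ) (h'.1 β hβ),
    fun γ hγ => relRange_union B B' γ ▸ HSetOplusReg.union_mem hacc hnd (h.2 γ hγ) (h'.2 γ hγ)⟩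

theorem of_subset (hacc : Accommodating Edge ℬ) (hnd : NonDegenerate ℬ) {B' : Set V}
    (h : SHLevel Edge ℬ A n B) (hB' : B' ∈ ℬ) (hB'B : B' ⊆ B) : SHLevel Edge ℬ A n B' :=
  ⟨fun β hβ => HSet.mem_of_subset (h.1 β hβ) (relRange_mem hacc hnd hB' β) (relRange_mono hB'B β),
    fun γ hγ => HSetOplusReg.mem_of_subset hacc (h.2 γ hγ) (relRange_mem hacc hnd hB' γ)
      (relRange_mono hB'B γ)⟩

theorem succ (hB : B ∈ HSetOplusReg Edge ℬ A)
    (h : ∀ a : Λ, SHLevel Edge ℬ A n (relRange Edge B [a])) : SHLevel Edge ℬ A (n + 1) B := by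
  refine ⟨fun β hβ => ?_, fun γ hγ => ?_⟩
  · obtain _ | ⟨a, β⟩ := β
    · exact absurd hβ (Nat.succ_ne_zero n).symm
    · exact (h a).1 β (Nat.succ_injective hβ)
  · obtain _ | ⟨a, γ⟩ := γ
    · exact hB
    · exact (h a).2 γ (Nat.succ_lt_succ_iff.mp hγ)

theorem relRange (hacc : Accommodating Edge ℬ) (hnd : NonDegenerate ℬ) (h : SHLevel Edge ℬ A n B)
    (α : List Λ) : SHLevel Edge ℬ A (n - α.length) (_root_.relRange Edge B α) := by
  refine ⟨fun β hβ => ?_, fun γ hγ => ?_⟩ <;> rw [← relRange_append]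
  · exact h.relRange_mem_HSet hacc hnd (by rw [List.length_append]; omega)
  · exact h.2 _ (by rw [List.length_append]; omega)

end SHLevel

theorem HSet_subset_SHSet (hnd : NonDegenerate ℬ) : HSet Edge ℬ A ⊆ SHSet Edge ℬ A :=
  fun _ hB => (mem_SHSet_iff hnd).mpr ⟨hB.1, 0, SHLevel.zero_iff.mpr hB⟩

theorem SHSet_hered (hacc : Accommodating Edge ℬ) (hnd : NonDegenerate ℬ) :
    Hered Edge ℬ (SHSet Edge ℬ A) := by
  refine ⟨fun _ hB => hB.1, fun B hB α _ => ?_, fun B hB B' hB' => ?_, fun B hB B' hB' hB'B => ?_⟩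
  all_goals obtain ⟨hBℬ, n, h⟩ := (mem_SHSet_iff hnd).mp hB
  · exact (mem_SHSet_iff hnd).mpr ⟨relRange_mem hacc hnd hBℬ α, _, h.relRange hacc hnd α⟩
  · obtain ⟨hB'ℬ, m, h'⟩ := (mem_SHSet_iff hnd).mp hB'
    exact (mem_SHSet_iff hnd).mpr ⟨hacc.2.2.1 B hBℬ B' hB'ℬ, max n m,
      (h.mono hacc hnd (le_max_left n m)).union hacc hnd (h'.mono hacc hnd (le_max_right n m))⟩
  · exact (mem_SHSet_iff hnd).mpr ⟨hB', n, h.of_subset hacc hnd hB' hB'B⟩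

theorem SHSet_satur (hacc : Accommodating Edge ℬ) (hnd : NonDegenerate ℬ) :
    Satur Edge ℬ (SHSet Edge ℬ A) := by
  intro C hC hreg hsat
  have hlevel : ∀ a ∈ edgeLabels Edge C,
      ∀ᶠ n in Filter.atTop, SHLevel Edge ℬ A n (relRange Edge C [a]) := by
    intro a ha
    have hLP : IsLP Edge [a] := (isLP_of_relRange_nonempty
      (relRange_singleton_nonempty_iff.mpr ha)).resolve_left (List.cons_ne_nil a [])
    obtain ⟨-, n, h⟩ := (mem_SHSet_iff hnd).mp (hsat [a] hLP)
    exact Filter.eventually_atTop.mpr ⟨n, fun m hm => h.mono hacc hnd hm⟩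
  obtain ⟨n, hn⟩ :=
    ((Filter.eventually_all_finite (hreg.finite_edgeLabels hC subset_rfl)).mpr hlevel).exists
  refine (mem_SHSet_iff hnd).mpr
    ⟨hC, n + 1, SHLevel.succ (HSetOplusReg.of_regularSet hnd hC hreg) fun a => ?_⟩
  by_cases ha : a ∈ edgeLabels Edge C
  · exact hn a ha
  · rw [Set.not_nonempty_iff_eq_empty.mp (mt relRange_singleton_nonempty_iff.mp ha)]
    exact SHLevel.empty hnd n

theorem SHSet_subset_of_hered_of_satur (hacc : Accommodating Edge ℬ) (hnd : NonDegenerate ℬ)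
    {H : Set (Set V)} (hH : Hered Edge ℬ H) (hS : Satur Edge ℬ H) (hAH : A ∈ H) :
    SHSet Edge ℬ A ⊆ H := by
  suffices ∀ n, ∀ B ∈ ℬ, SHLevel Edge ℬ A n B → B ∈ H from fun B hB =>
    let ⟨hBℬ, n, h⟩ := (mem_SHSet_iff hnd).mp hB
    this n B hBℬ h
  intro n
  induction n with
  | zero => exact fun B _ h => HSet_subset_of_hered hnd hH hAH (SHLevel.zero_iff.mp h)
  | succ n ih =>
    intro B hB h
    obtain ⟨C, hC, D, hD, hDreg, hBCD⟩ := h.2 [] (Nat.succ_pos n)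
    replace hBCD : B = C ∪ D := hBCD
    have hDH : D ∈ H := hS D hD hDreg fun α hα => by
      have hlen : 0 < α.length := List.length_pos_iff.mpr hα.1
      have hBα : relRange Edge B α ∈ H :=
        ih _ (relRange_mem hacc hnd hB α) ((h.relRange hacc hnd α).mono hacc hnd (by omega))
      exact hH.2.2.2 _ hBα _ (relRange_mem hacc hnd hD α)
        (relRange_mono (hBCD ▸ Set.subset_union_right) α)
    rw [hBCD]
    exact hH.2.2.1 C (HSet_subset_of_hered hnd hH hAH hC) D hDH

end LabeledSpace

theorem SHSet_smallest_saturated_hereditary_general (Edge : V → Λ → V → Prop) (ℬ : Set (Set V))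
    (hacc : Accommodating Edge ℬ) (hnd : NonDegenerate ℬ)
    (A : Set V) (hA : A ∈ ℬ) :
    Hered Edge ℬ (SHSet Edge ℬ A) ∧ Satur Edge ℬ (SHSet Edge ℬ A) ∧
      A ∈ SHSet Edge ℬ A ∧
      ∀ H : Set (Set V), Hered Edge ℬ H → Satur Edge ℬ H → A ∈ H →
        SHSet Edge ℬ A ⊆ H :=
  ⟨SHSet_hered hacc hnd, SHSet_satur hacc hnd, HSet_subset_SHSet hnd (HSet.self_mem hA),
    fun _ hH hS hAH => SHSet_subset_of_hered_of_satur hacc hnd hH hS hAH⟩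

/-- `S(H(A))` is the smallest hereditary saturated subset of `ℬ`
containing `A`. -/
theorem SHSet_smallest_saturated_hereditary (Edge : V → Λ → V → Prop) (ℬ : Set (Set V))
    (hacc : Accommodating Edge ℬ) (hnd : NonDegenerate ℬ) (hwlr : WLR Edge ℬ)
    (A : Set V) (hA : A ∈ ℬ) (hAne : A.Nonempty) :
    Hered Edge ℬ (SHSet Edge ℬ A) ∧ Satur Edge ℬ (SHSet Edge ℬ A) ∧
      A ∈ SHSet Edge ℬ A ∧
      ∀ H : Set (Set V), Hered Edge ℬ H → Satur Edge ℬ H → A ∈ H →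
        SHSet Edge ℬ A ⊆ H :=
  SHSet_smallest_saturated_hereditary_general Edge ℬ hacc hnd A hA
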